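/- The Fourier transform of the Matérn covariance function C(h) = (2^{1−ν} φ² / ((4π)^{d/2} Γ(ν + d/2) κ^{2ν})) (κ‖h‖)^ν K_ν(κ‖h‖) on ℝ^d equals the spectral density S(k) = (φ²/(2π)^d) (κ² + ‖k‖²)^{−(ν + d/2)}. -/

import Mathlib

/-!
The Matérn covariance is a Gamma mixture of Gaussians. The substitution `u = (x / 2) eᵗ` gives
`2 (x / 2)^ν K_ν(x) = ∫₀^∞ u^(ν-1) e^(-u - x² / (4u)) du`, so `C(h)` is an integral over `u` of
the Gaussians `e^(-κ² ‖h‖² / (4u))`. After exchanging the integrals, each Gaussian has Fourier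
transform `(4πu / κ²)^(d/2) e^(-‖k‖² u / κ²)`, and what remains is the Gamma integral
`∫₀^∞ u^(ν + d/2 - 1) e^(-(1 + ‖k‖² / κ²) u) du = Γ(ν + d/2) (1 + ‖k‖² / κ²)^(-(ν + d/2))`.
-/

open MeasureTheory Real Set

noncomputable def besselK (ν x : ℝ) : ℝ :=
  ∫ t in Ioi (0 : ℝ), Real.exp (-x * Real.cosh t) * Real.cosh (ν * t)

/-- The Matérn covariance function in dimension `d` with shape `ν`,
variance parameter `φ2` (denoted `φ²` in the paper) and scale `κ`. -/
noncomputable def maternCov (d : ℕ) (ν φ2 κ : ℝ) (h : EuclideanSpace ℝ (Fin d)) : ℝ :=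
  2 ^ (1 - ν) * φ2 / ((4 * π) ^ ((d : ℝ) / 2) * Real.Gamma (ν + d / 2) * κ ^ (2 * ν)) *
    (κ * ‖h‖) ^ ν * besselK ν (κ * ‖h‖)

section Substitution

variable {E : Type*} [NormedAddCommGroup E] [NormedSpace ℝ E] {c : ℝ}

lemma image_const_mul_exp (hc : 0 < c) : (fun t ↦ c * rexp t) '' univ = Ioi 0 := by
  rw [image_univ, ← Function.comp_def (c * ·) rexp, range_comp, range_exp,
    image_const_mul_Ioi_zero hc]

lemma injective_const_mul_exp (hc : 0 < c) : Function.Injective fun t ↦ c * rexp t :=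
  fun _ _ h ↦ exp_injective (mul_left_cancel₀ hc.ne' h)

theorem integral_Ioi_eq_integral_comp_mul_exp (hc : 0 < c) (g : ℝ → E) :
    ∫ u in Ioi 0, g u = ∫ t, (c * rexp t) • g (c * rexp t) := by
  rw [← image_const_mul_exp hc, integral_image_eq_integral_abs_deriv_smul MeasurableSet.univ
    (fun t _ ↦ ((hasDerivAt_exp t).const_mul c).hasDerivWithinAt)
    (injective_const_mul_exp hc).injOn, Measure.restrict_univ]
  simp_rw [abs_of_pos (mul_pos hc (exp_pos _))]

theorem integrableOn_Ioi_iff_integrable_comp_mul_exp (hc : 0 < c) (g : ℝ → E) :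
    IntegrableOn g (Ioi 0) ↔ Integrable fun t ↦ (c * rexp t) • g (c * rexp t) := by
  rw [← image_const_mul_exp hc, integrableOn_image_iff_integrableOn_abs_deriv_smul
    MeasurableSet.univ (fun t _ ↦ ((hasDerivAt_exp t).const_mul c).hasDerivWithinAt)
    (injective_const_mul_exp hc).injOn, integrableOn_univ]
  simp_rw [abs_of_pos (mul_pos hc (exp_pos _))]

end Substitution

theorem integral_exp_neg_mul_cosh_mul_exp {ν x : ℝ}
    (hF : Integrable fun t ↦ rexp (-x * cosh t) * rexp (ν * t)) :
    ∫ t, rexp (-x * cosh t) * rexp (ν * t) = 2 * besselK ν x := by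
  set F := fun t ↦ rexp (-x * cosh t) * rexp (ν * t)
  calc ∫ t, F t = ((∫ t, F t) + ∫ t, F (-t)) / 2 := by rw [integral_neg_eq_self]; ring
    _ = ∫ t, (F t + F (-t)) / 2 := by rw [integral_div, integral_add hF hF.comp_neg]
    _ = ∫ t, rexp (-x * cosh |t|) * cosh (ν * |t|) := by
      congr 1 with t
      rcases abs_choice t with ht | ht <;>
        simp only [F, ht, cosh_neg, mul_neg] <;> rw [cosh_eq (ν * t), exp_neg] <;> ring
    _ = 2 * besselK ν x := integral_comp_abs (f := fun t ↦ rexp (-x * cosh t) * cosh (ν * t))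

lemma integrableOn_rpow_mul_exp_neg_sub_div {ν c : ℝ} (hν : 0 < ν) (hc : 0 ≤ c) :
    IntegrableOn (fun u ↦ u ^ (ν - 1) * rexp (-u - c / u)) (Ioi 0) := by
  refine (GammaIntegral_convergent hν).mono' (by fun_prop) ?_
  filter_upwards [ae_restrict_mem measurableSet_Ioi] with u (hu : 0 < u)
  rw [norm_of_nonneg (by positivity), mul_comm]
  gcongr
  linarith [div_nonneg hc hu.le]

theorem integral_rpow_mul_exp_neg_sub_div {ν x : ℝ} (hν : 0 < ν) (hx : 0 < x) :
    ∫ u in Ioi 0, u ^ (ν - 1) * rexp (-u - x ^ 2 / (4 * u)) = 2 * (x / 2) ^ ν * besselK ν x := by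
  have hc : 0 < x / 2 := by positivity
  have hsubst (t : ℝ) : (x / 2 * rexp t) • ((x / 2 * rexp t) ^ (ν - 1) *
      rexp (-(x / 2 * rexp t) - x ^ 2 / (4 * (x / 2 * rexp t))))
        = (x / 2) ^ ν * (rexp (-x * cosh t) * rexp (ν * t)) := by
    have hpos : 0 < x / 2 * rexp t := by positivity
    have hpow : x / 2 * rexp t * (x / 2 * rexp t) ^ (ν - 1) = (x / 2) ^ ν * rexp (ν * t) := by
      rw [rpow_sub_one hpos.ne', mul_div_cancel₀ _ hpos.ne',
        mul_rpow hc.le (exp_pos t).le, ← exp_mul, mul_comm t]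
    have hexp : -(x / 2 * rexp t) - x ^ 2 / (4 * (x / 2 * rexp t)) = -x * cosh t := by
      rw [cosh_eq, exp_neg]
      field_simp
      ring
    rw [smul_eq_mul, ← mul_assoc, hpow, hexp]
    ring
  have hF : Integrable fun t ↦ rexp (-x * cosh t) * rexp (ν * t) := by
    rw [← integrable_const_mul_iff (isUnit_iff_ne_zero.2 (rpow_pos_of_pos hc ν).ne')]
    simpa only [div_div, hsubst] using (integrableOn_Ioi_iff_integrable_comp_mul_exp hc _).1
      (integrableOn_rpow_mul_exp_neg_sub_div hν (by positivity : 0 ≤ x ^ 2 / 4))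
  rw [integral_Ioi_eq_integral_comp_mul_exp hc]
  simp_rw [hsubst]
  rw [integral_const_mul, integral_exp_neg_mul_cosh_mul_exp hF]
  ring

open Complex

section Gaussian

variable {V : Type*} [NormedAddCommGroup V] [InnerProductSpace ℝ V]

lemma exp_neg_mul_sq_norm_mul_cexp {b : ℝ} (k h : V) :
    (rexp (-b * ‖h‖ ^ 2) : ℂ) * cexp (-I * (inner ℝ k h : ℝ))
      = cexp (-(b : ℂ) * (‖h‖ : ℂ) ^ 2 + -I * (inner ℝ k h : ℝ)) := by
  push_cast
  rw [← Complex.exp_add]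

variable [FiniteDimensional ℝ V] [MeasurableSpace V] [BorelSpace V]

lemma integrable_exp_neg_mul_sq_norm_mul_cexp {b : ℝ} (hb : 0 < b) (k : V) :
    Integrable fun h : V ↦ (rexp (-b * ‖h‖ ^ 2) : ℂ) * cexp (-I * (inner ℝ k h : ℝ)) := by
  simpa only [exp_neg_mul_sq_norm_mul_cexp] using
    GaussianFourier.integrable_cexp_neg_mul_sq_norm_add (by simpa using hb) (-I) k

theorem integral_exp_neg_mul_sq_norm_mul_cexp {b : ℝ} (hb : 0 < b) (k : V) :
    ∫ h : V, (rexp (-b * ‖h‖ ^ 2) : ℂ) * cexp (-I * (inner ℝ k h : ℝ))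
      = ((π / b) ^ (Module.finrank ℝ V / 2 : ℝ) * rexp (-‖k‖ ^ 2 / (4 * b)) : ℝ) := by
  simp only [exp_neg_mul_sq_norm_mul_cexp]
  rw [GaussianFourier.integral_cexp_neg_mul_sq_norm_add (by simpa using hb), ofReal_mul,
    ofReal_cpow (by positivity), ofReal_exp]
  push_cast
  rw [neg_sq, I_sq, neg_one_mul]

end Gaussian

section Mixture

variable {V : Type*} [NormedAddCommGroup V] [InnerProductSpace ℝ V] {ν κ u : ℝ}

-- integrating out `u` gives `maternCov h * e^(-i⟨k, h⟩)` up to a constant factor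
noncomputable def maternMixture (ν κ : ℝ) (k : V) (u : ℝ) (h : V) : ℂ :=
  (u ^ (ν - 1) * rexp (-u - (κ * ‖h‖) ^ 2 / (4 * u)) : ℝ) * cexp (-I * (inner ℝ k h : ℝ))

lemma maternMixture_eq_mul (k h : V) :
    maternMixture ν κ k u h = (u ^ (ν - 1) * rexp (-u) : ℝ) *
      ((rexp (-(κ ^ 2 / (4 * u)) * ‖h‖ ^ 2) : ℂ) * cexp (-I * (inner ℝ k h : ℝ))) := by
  rw [maternMixture, show -u - (κ * ‖h‖) ^ 2 / (4 * u) = -u + -(κ ^ 2 / (4 * u)) * ‖h‖ ^ 2 by ring,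
    Real.exp_add]
  push_cast
  ring

lemma norm_maternMixture (hu : 0 ≤ u) (k h : V) :
    ‖maternMixture ν κ k u h‖ = u ^ (ν - 1) * rexp (-u - (κ * ‖h‖) ^ 2 / (4 * u)) := by
  rw [maternMixture, norm_mul, norm_exp, norm_real, norm_of_nonneg (by positivity)]
  simp

variable [FiniteDimensional ℝ V] [MeasurableSpace V] [BorelSpace V]

theorem integral_maternMixture (hκ : 0 < κ) (hu : 0 < u) (k : V) :
    ∫ h, maternMixture ν κ k u h = ((4 * π / κ ^ 2) ^ (Module.finrank ℝ V / 2 : ℝ) *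
      (u ^ (ν + Module.finrank ℝ V / 2 - 1) * rexp (-((1 + ‖k‖ ^ 2 / κ ^ 2) * u))) : ℝ) := by
  simp_rw [maternMixture_eq_mul]
  rw [integral_const_mul, integral_exp_neg_mul_sq_norm_mul_cexp (by positivity), ← ofReal_mul]
  congr 1
  rw [show π / (κ ^ 2 / (4 * u)) = 4 * π / κ ^ 2 * u by field_simp,
    mul_rpow (by positivity) hu.le, add_sub_right_comm, rpow_add hu,
    show -((1 + ‖k‖ ^ 2 / κ ^ 2) * u) = -u + -‖k‖ ^ 2 / (4 * (κ ^ 2 / (4 * u))) by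
      field_simp; ring,
    Real.exp_add]
  ring

theorem integral_norm_maternMixture (hκ : 0 < κ) (hu : 0 < u) (k : V) :
    ∫ h, ‖maternMixture ν κ k u h‖ = (4 * π / κ ^ 2) ^ (Module.finrank ℝ V / 2 : ℝ) *
      (u ^ (ν + Module.finrank ℝ V / 2 - 1) * rexp (-u)) := by
  -- `‖maternMixture ν κ k u h‖` is `maternMixture ν κ 0 u h`, whose integral is known
  have hk : ∀ h, (‖maternMixture ν κ k u h‖ : ℂ) = maternMixture ν κ 0 u h := fun h ↦ by
    rw [norm_maternMixture hu.le, maternMixture, inner_zero_left, ofReal_zero, mul_zero,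
      Complex.exp_zero, mul_one]
  rw [← ofReal_inj, ← integral_complex_ofReal, funext hk, integral_maternMixture hκ hu 0]
  simp

theorem integrable_maternMixture (hν : 0 < ν) (hκ : 0 < κ) (k : V) :
    Integrable (Function.uncurry (maternMixture ν κ k))
      ((volume.restrict (Ioi 0)).prod volume) := by
  have hmeas : Measurable (Function.uncurry (maternMixture ν κ k)) := by
    unfold maternMixture Function.uncurry
    fun_prop
  rw [integrable_prod_iff hmeas.aestronglyMeasurable]
  constructor
  · filter_upwards [ae_restrict_mem measurableSet_Ioi] with u (hu : 0 < u)
    simp_rw [Function.uncurry_apply_pair, maternMixture_eq_mul]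
    exact (integrable_exp_neg_mul_sq_norm_mul_cexp (by positivity) k).const_mul _
  · refine IntegrableOn.congr_fun ?_ (fun u hu ↦ (integral_norm_maternMixture hκ hu k).symm)
      measurableSet_Ioi
    exact IntegrableOn.congr_fun ((GammaIntegral_convergent (s := ν + Module.finrank ℝ V / 2)
      (by positivity)).const_mul ((4 * π / κ ^ 2) ^ (Module.finrank ℝ V / 2 : ℝ)))
      (fun u _ ↦ by ring) measurableSet_Ioi

theorem integral_integral_maternMixture (hν : 0 < ν) (hκ : 0 < κ) (k : V) :
    ∫ h, ∫ u in Ioi 0, maternMixture ν κ k u h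
      = ((4 * π) ^ (Module.finrank ℝ V / 2 : ℝ) * Real.Gamma (ν + Module.finrank ℝ V / 2) *
          κ ^ (2 * ν) * (κ ^ 2 + ‖k‖ ^ 2) ^ (-(ν + Module.finrank ℝ V / 2)) : ℝ) := by
  rw [← integral_integral_swap (integrable_maternMixture hν hκ k),
    setIntegral_congr_fun measurableSet_Ioi fun u hu ↦ integral_maternMixture hκ hu k,
    integral_complex_ofReal, integral_const_mul,
    integral_rpow_mul_exp_neg_mul_Ioi (by positivity) (by positivity)]
  congr 1
  rw [show 1 / (1 + ‖k‖ ^ 2 / κ ^ 2) = κ ^ 2 / (κ ^ 2 + ‖k‖ ^ 2) by field_simp,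
    div_rpow (by positivity) (by positivity), div_rpow (by positivity) (by positivity),
    rpow_add (x := κ ^ 2) (by positivity), rpow_neg (by positivity), rpow_mul hκ.le, rpow_two]
  field_simp

end Mixture

lemma maternCov_eq_integral {d : ℕ} {ν φ2 κ : ℝ} (hν : 0 < ν) (hκ : 0 < κ)
    {h : EuclideanSpace ℝ (Fin d)} (hh : h ≠ 0) :
    maternCov d ν φ2 κ h = φ2 / ((4 * π) ^ ((d : ℝ) / 2) * Real.Gamma (ν + d / 2) * κ ^ (2 * ν)) *
      ∫ u in Ioi 0, u ^ (ν - 1) * rexp (-u - (κ * ‖h‖) ^ 2 / (4 * u)) := by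
  rw [maternCov, integral_rpow_mul_exp_neg_sub_div hν (by positivity),
    rpow_sub two_pos, rpow_one, div_rpow (by positivity) zero_le_two]
  field_simp

lemma maternCov_mul_cexp_eq_integral_maternMixture {d : ℕ} {ν φ2 κ : ℝ} (hν : 0 < ν)
    (hκ : 0 < κ) {h : EuclideanSpace ℝ (Fin d)} (hh : h ≠ 0) (k : EuclideanSpace ℝ (Fin d)) :
    (maternCov d ν φ2 κ h : ℂ) * cexp (-I * (inner ℝ k h : ℝ))
      = (φ2 / ((4 * π) ^ ((d : ℝ) / 2) * Real.Gamma (ν + d / 2) * κ ^ (2 * ν)) : ℝ) *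
        ∫ u in Ioi 0, maternMixture ν κ k u h := by
  simp_rw [maternMixture]
  rw [integral_mul_const, integral_complex_ofReal, maternCov_eq_integral hν hκ hh]
  push_cast
  ring

theorem maternCov_fourierTransform_general (d : ℕ) (hd : 0 < d) (ν φ κ : ℝ)
    (hν : 0 < ν) (hκ : 0 < κ) (k : EuclideanSpace ℝ (Fin d)) :
    (2 * π : ℂ) ^ (-(d : ℤ)) *
        ∫ h : EuclideanSpace ℝ (Fin d),
          (maternCov d ν (φ ^ 2) κ h : ℂ) * Complex.exp (-Complex.I * (inner ℝ k h : ℝ))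
      = ((φ ^ 2 / (2 * π) ^ (d : ℝ) * (κ ^ 2 + ‖k‖ ^ 2) ^ (-(ν + d / 2)) : ℝ) : ℂ) := by
  have : Nonempty (Fin d) := ⟨⟨0, hd⟩⟩
  have hae : ∀ᵐ h : EuclideanSpace ℝ (Fin d), h ≠ 0 :=
    measure_eq_zero_iff_ae_notMem.1 (measure_singleton 0)
  rw [integral_congr_ae
      (hae.mono fun h hh ↦ maternCov_mul_cexp_eq_integral_maternMixture hν hκ hh k),
    integral_const_mul, integral_integral_maternMixture hν hκ k, finrank_euclideanSpace_fin,
    ← ofReal_mul, show (2 * π : ℂ) = (2 * π : ℝ) by push_cast; rfl, ← ofReal_zpow, ← ofReal_mul,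
    ofReal_inj, zpow_neg, zpow_natCast, ← rpow_natCast]
  have : 0 < Real.Gamma (ν + d / 2) := Gamma_pos_of_pos (by positivity)
  field_simp

/-- The Fourier transform `F(C)(k) = (2π)^{−d} ∫ C(h) e^{−i⟨k,h⟩} dh` of the
Matérn covariance function equals the spectral density
`S(k) = (φ²/(2π)^d)(κ² + ‖k‖²)^{−(ν+d/2)}`. -/
theorem maternCov_fourierTransform (d : ℕ) (hd : 0 < d) (ν φ κ : ℝ)
    (hν : 0 < ν) (hφ : 0 < φ) (hκ : 0 < κ) (k : EuclideanSpace ℝ (Fin d)) :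
    (2 * π : ℂ) ^ (-(d : ℤ)) *
        ∫ h : EuclideanSpace ℝ (Fin d),
          (maternCov d ν (φ ^ 2) κ h : ℂ) * Complex.exp (-Complex.I * (inner ℝ k h : ℝ))
      = ((φ ^ 2 / (2 * π) ^ (d : ℝ) * (κ ^ 2 + ‖k‖ ^ 2) ^ (-(ν + d / 2)) : ℝ) : ℂ) :=
  maternCov_fourierTransform_general d hd ν φ κ hν hκ k
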